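/- arXiv:math/0504046 — 2 statements merged into one kernel-verified Lean document; each statement's English description precedes it below -/
import Mathlib

section
/- A linear functional l on a Riesz space X is a Riesz homomorphism if and only if l is positive and its kernel is a Riesz subspace (assuming l ≠ 0), and in that case the kernel is also a Grothendieck subspace. -/
variable {X : Type*} [Lattice X] [AddCommGroup X]
  [CovariantClass X X (· + ·) (· ≤ ·)] [Module ℝ X] [PosSMulMono ℝ X]

/-- A Grothendieck subspace: closed under `x ⊔ y ⊔ 0 + x ⊓ y ⊓ 0`. -/
def IsGrothendieckSubspace (H : Submodule ℝ X) : Prop :=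
  ∀ x ∈ H, ∀ y ∈ H, x ⊔ y ⊔ 0 + x ⊓ y ⊓ 0 ∈ H

/-- A Riesz subspace: closed under the lattice operations. -/
def IsRieszSubspace (H : Submodule ℝ X) : Prop :=
  ∀ x ∈ H, ∀ y ∈ H, x ⊔ y ∈ H ∧ x ⊓ y ∈ H

/-- A Riesz homomorphism: a linear map preserving finite suprema. -/
def IsRieszHom (f : X →ₗ[ℝ] ℝ) : Prop :=
  ∀ x y : X, f (x ⊔ y) = f x ⊔ f y

/-- A positive linear functional. -/
def IsPositive (f : X →ₗ[ℝ] ℝ) : Prop :=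
  ∀ x : X, 0 ≤ x → 0 ≤ f x

/-- `p` is the positive part of the order bounded functional `l`
(so `l₋ = p - l` and `|l| = p + (p - l)`). -/
def IsPosPartOf (l p : X →ₗ[ℝ] ℝ) : Prop :=
  IsPositive p ∧ IsPositive (p - l) ∧
    ∀ x : X, 0 ≤ x → p x = sSup {r : ℝ | ∃ y : X, 0 ≤ y ∧ y ≤ x ∧ l y = r}

/-!
If `l` is positive and `ker l` is a Riesz subspace, pick `e ≥ 0` with `l e = 1`. Then
`x - l x • e ∈ ker l`, so its positive part lies in `ker l` too, and the bound
`x ⊔ 0 ≤ (x - l x • e) ⊔ 0 + (l x ⊔ 0) • e` gives `l (x ⊔ 0) ≤ l x ⊔ 0`; positivity gives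
the reverse. A linear map commuting with `x ↦ x ⊔ 0` preserves `⊔`, as `x ⊔ y = (x - y) ⊔ 0 + y`.
Conversely, `inf_add_sup` transfers `⊔`-preservation to `⊓`-preservation.
-/

theorem sup_eq_sub_sup_zero_add {α : Type*} [Lattice α] [AddGroup α] [AddRightMono α] (a b : α) :
    a ⊔ b = (a - b) ⊔ 0 + b := by
  rw [sup_add, sub_add_cancel, zero_add]

section

variable {E : Type*} [Lattice E] [AddCommGroup E] [Module ℝ E] {f : E →ₗ[ℝ] ℝ}

theorem IsRieszSubspace.isGrothendieckSubspace {H : Submodule ℝ E} (hH : IsRieszSubspace H) :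
    IsGrothendieckSubspace H := by
  intro x hx y hy
  exact H.add_mem (hH _ (hH x hx y hy).1 0 H.zero_mem).1 (hH _ (hH x hx y hy).2 0 H.zero_mem).2

theorem IsRieszHom.isPositive (hf : IsRieszHom f) : IsPositive f := by
  intro x hx
  have h := hf x 0
  rw [sup_eq_left.mpr hx, map_zero] at h
  exact h ▸ le_sup_right

theorem IsRieszHom.map_inf [AddLeftMono E] (hf : IsRieszHom f) (x y : E) :
    f (x ⊓ y) = f x ⊓ f y := by
  have h := congrArg f (inf_add_sup x y)
  rw [map_add, map_add, hf, ← inf_add_sup (f x) (f y)] at h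
  exact add_right_cancel h

theorem IsRieszHom.isRieszSubspace_ker [AddLeftMono E] (hf : IsRieszHom f) :
    IsRieszSubspace (LinearMap.ker f) := by
  intro x hx y hy
  simp only [LinearMap.mem_ker] at hx hy ⊢
  rw [hf, hf.map_inf, hx, hy]
  simp

theorem IsPositive.monotone [AddLeftMono E] (hf : IsPositive f) : Monotone f := by
  intro x y hxy
  simpa using hf (y - x) (sub_nonneg.mpr hxy)

theorem IsPositive.exists_apply_eq_one [AddLeftMono E] [PosSMulMono ℝ E] (hf : IsPositive f)
    (hf0 : f ≠ 0) : ∃ e, 0 ≤ e ∧ f e = 1 := by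
  obtain ⟨u, hu0, hu⟩ : ∃ u, 0 ≤ u ∧ f u ≠ 0 := by
    by_contra! h
    refine hf0 (LinearMap.ext fun z => ?_)
    rw [← posPart_sub_negPart z, map_sub, h _ (posPart_nonneg z), h _ (negPart_nonneg z)]
    simp
  exact ⟨(f u)⁻¹ • u, smul_nonneg (inv_nonneg.mpr (hf u hu0)) hu0, by simp [hu]⟩

theorem IsPositive.map_sup_zero [AddLeftMono E] [PosSMulMono ℝ E] (hf : IsPositive f)
    (hker : IsRieszSubspace (LinearMap.ker f)) {e : E} (he0 : 0 ≤ e) (he : f e = 1) (x : E) :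
    f (x ⊔ 0) = f x ⊔ 0 := by
  set k := x - f x • e
  have hk : f (k ⊔ 0) = 0 :=
    (hker k (by simp [k, he]) 0 (LinearMap.ker f).zero_mem).1
  have hscale : f x • e ≤ (f x ⊔ 0) • e :=
    sub_nonneg.mp <| by
      simpa only [← sub_smul] using smul_nonneg (sub_nonneg.mpr (le_max_left (f x) 0)) he0
  have hbound : x ⊔ 0 ≤ k ⊔ 0 + (f x ⊔ 0) • e := by
    refine sup_le ?_ (add_nonneg le_sup_right (smul_nonneg le_sup_right he0))
    calc x = k + f x • e := (sub_add_cancel x _).symm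
      _ ≤ k ⊔ 0 + (f x ⊔ 0) • e := add_le_add le_sup_left hscale
  refine le_antisymm ?_ (sup_le (hf.monotone le_sup_left) (hf _ le_sup_right))
  simpa [hk, he] using hf.monotone hbound

theorem isRieszHom_of_map_sup_zero [AddLeftMono E] (hf : ∀ x, f (x ⊔ 0) = f x ⊔ 0) :
    IsRieszHom f := by
  intro x y
  rw [sup_eq_sub_sup_zero_add x y, map_add, hf, map_sub, ← sup_eq_sub_sup_zero_add]

theorem IsPositive.isRieszHom [AddLeftMono E] [PosSMulMono ℝ E] (hf : IsPositive f)
    (hker : IsRieszSubspace (LinearMap.ker f)) : IsRieszHom f := by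
  rcases eq_or_ne f 0 with rfl | hf0
  · simp [IsRieszHom]
  obtain ⟨e, he0, he⟩ := hf.exists_apply_eq_one hf0
  exact isRieszHom_of_map_sup_zero (hf.map_sup_zero hker he0 he)

end

theorem riesz_hom_iff_positive_and_riesz_kernel_general (l : X →ₗ[ℝ] ℝ) :
    (IsRieszHom l ↔ IsPositive l ∧ IsRieszSubspace (LinearMap.ker l)) ∧
      (IsRieszHom l → IsGrothendieckSubspace (LinearMap.ker l)) :=
  ⟨⟨fun h => ⟨h.isPositive, h.isRieszSubspace_ker⟩, fun h => h.1.isRieszHom h.2⟩,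
    fun h => h.isRieszSubspace_ker.isGrothendieckSubspace⟩

theorem riesz_hom_iff_positive_and_riesz_kernel (l : X →ₗ[ℝ] ℝ) (hl0 : l ≠ 0) :
    (IsRieszHom l ↔ IsPositive l ∧ IsRieszSubspace (LinearMap.ker l)) ∧
      (IsRieszHom l → IsGrothendieckSubspace (LinearMap.ker l)) :=
  riesz_hom_iff_positive_and_riesz_kernel_general l
end

section
/- If the kernel of a positive linear functional l on a Riesz space X is a Grothendieck subspace and l is not a Riesz homomorphism, then l decomposes as a sum of two nonzero Riesz homomorphisms. -/
/-!
If `l` is not a Riesz homomorphism there are disjoint `u, v ≥ 0` with `l u, l v > 0`. The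
Grothendieck property of `ker l`, applied to elements with a common `l`-value, shows that `u` and
`v` exhaust every `x ≥ 0`: `l x = l (x ⊓ s • u) + l (x ⊓ t • v)` for all large `s, t`. Hence
`l (x ⊓ s • u)` stabilises in `s`; as a function of `x` it is additive and positively homogeneous
on the positive cone, so it extends to a positive functional `f`, likewise `g` for `v`, and
`l = f + g`.
The same identity rules out three pairwise disjoint positive elements of positive `l`-value, which
makes `f` and `g` Riesz homomorphisms.
-/

variable {X : Type*} [Lattice X] [AddCommGroup X]
  [CovariantClass X X (· + ·) (· ≤ ·)] [Module ℝ X] [PosSMulMono ℝ X]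

section LatticeOrderedGroup

variable {α : Type*} [Lattice α] [AddCommGroup α] [AddLeftMono α]

theorem add_eq_sup_of_inf_eq_zero {a b : α} (h : a ⊓ b = 0) : a + b = a ⊔ b := by
  rw [← inf_add_sup a b, h, zero_add]

theorem inf_add_inf_le_of_inf_eq_zero {a b x : α} (hx : 0 ≤ x) (h : a ⊓ b = 0) :
    x ⊓ a + x ⊓ b ≤ x := by
  have hdisj : x ⊓ a ⊓ (x ⊓ b) = 0 := by rw [← inf_inf_distrib_left, h, inf_eq_right.2 hx]
  rw [add_eq_sup_of_inf_eq_zero hdisj]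
  exact sup_le inf_le_left inf_le_left

theorem inf_add_le_inf_add_inf {a b c : α} (ha : 0 ≤ a) (hb : 0 ≤ b) (hc : 0 ≤ c) :
    a ⊓ (b + c) ≤ a ⊓ b + a ⊓ c := by
  rw [inf_add, add_inf, add_inf]
  refine le_inf (le_inf ?_ ?_) (le_inf ?_ inf_le_right)
  · exact inf_le_left.trans (le_add_of_nonneg_left ha)
  · exact inf_le_left.trans (le_add_of_nonneg_right hc)
  · exact inf_le_left.trans (le_add_of_nonneg_left hb)

theorem apply_posPart_sub_apply_negPart {M : Type*} [AddCommGroup M] (φ : α → M)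
    (hadd : ∀ ⦃x y : α⦄, 0 ≤ x → 0 ≤ y → φ (x + y) = φ x + φ y) {p q : α}
    (hp : 0 ≤ p) (hq : 0 ≤ q) : φ (p - q)⁺ - φ (p - q)⁻ = φ p - φ q := by
  have h : (p - q)⁺ + q = p + (p - q)⁻ := by
    rw [← sub_eq_sub_iff_add_eq_add, posPart_sub_negPart]
  have := congrArg φ h
  rw [hadd (posPart_nonneg _) hq, hadd hp (negPart_nonneg _)] at this
  rw [sub_eq_sub_iff_add_eq_add, this]

end LatticeOrderedGroup

theorem inf_eq_zero_of_le_of_le {α : Type*} [SemilatticeInf α] [Zero α] {a b a' b' : α}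
    (h : a ⊓ b = 0) (ha' : 0 ≤ a') (hb' : 0 ≤ b') (ha : a' ≤ a) (hb : b' ≤ b) : a' ⊓ b' = 0 :=
  le_antisymm (h ▸ inf_le_inf ha hb) (le_inf ha' hb')

theorem smul_inf_of_nonneg {E : Type*} [Lattice E] [AddCommGroup E] [Module ℝ E] [PosSMulMono ℝ E]
    {c : ℝ} (hc : 0 ≤ c) (a b : E) : c • (a ⊓ b) = c • a ⊓ c • b := by
  rcases hc.eq_or_lt with rfl | hc
  · simp
  · exact (OrderIso.smulRight hc).map_inf a b

section OrderedModule

variable {E : Type*} [Lattice E] [AddCommGroup E] [AddLeftMono E] [Module ℝ E] [PosSMulMono ℝ E]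

theorem smul_le_smul_of_le_of_nonneg {a b : ℝ} {x : E} (hab : a ≤ b) (hx : 0 ≤ x) :
    a • x ≤ b • x := by
  rw [← sub_nonneg, ← sub_smul]
  exact smul_nonneg (sub_nonneg.2 hab) hx

theorem smul_inf_smul_eq_zero {u v : E} (huv : u ⊓ v = 0) {c d : ℝ} (hc : 0 ≤ c) (hd : 0 ≤ d) :
    c • u ⊓ d • v = 0 := by
  have hu : 0 ≤ u := huv ▸ inf_le_left
  have hv : 0 ≤ v := huv ▸ inf_le_right
  refine le_antisymm ?_ (le_inf (smul_nonneg hc hu) (smul_nonneg hd hv))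
  calc c • u ⊓ d • v ≤ (c + d) • u ⊓ (c + d) • v :=
        inf_le_inf (smul_le_smul_of_le_of_nonneg (by linarith) hu)
          (smul_le_smul_of_le_of_nonneg (by linarith) hv)
    _ = 0 := by rw [← smul_inf_of_nonneg (add_nonneg hc hd), huv, smul_zero]

variable {M : Type*} [AddCommGroup M] [Module ℝ M]

noncomputable def linearMapOfNonneg (φ : E → M)
    (hadd : ∀ ⦃x y : E⦄, 0 ≤ x → 0 ≤ y → φ (x + y) = φ x + φ y)
    (hsmul : ∀ ⦃c : ℝ⦄, 0 ≤ c → ∀ ⦃x : E⦄, 0 ≤ x → φ (c • x) = c • φ x) : E →ₗ[ℝ] M where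
  toFun x := φ x⁺ - φ x⁻
  map_add' x y := by
    have h := apply_posPart_sub_apply_negPart φ hadd
      (add_nonneg (posPart_nonneg x) (posPart_nonneg y))
      (add_nonneg (negPart_nonneg x) (negPart_nonneg y))
    rw [add_sub_add_comm, posPart_sub_negPart, posPart_sub_negPart] at h
    rw [h, hadd (posPart_nonneg x) (posPart_nonneg y), hadd (negPart_nonneg x) (negPart_nonneg y)]
    abel
  map_smul' c x := by
    rw [RingHom.id_apply, smul_sub]
    rcases le_or_gt 0 c with hc | hc
    · have h := apply_posPart_sub_apply_negPart φ hadd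
        (smul_nonneg hc (posPart_nonneg x)) (smul_nonneg hc (negPart_nonneg x))
      rw [← smul_sub, posPart_sub_negPart] at h
      rw [h, hsmul hc (posPart_nonneg x), hsmul hc (negPart_nonneg x)]
    · have hc' : 0 ≤ -c := by linarith
      have h := apply_posPart_sub_apply_negPart φ hadd
        (smul_nonneg hc' (negPart_nonneg x)) (smul_nonneg hc' (posPart_nonneg x))
      have hcx : (-c) • x⁻ - (-c) • x⁺ = c • x := by
        rw [← smul_sub, ← neg_sub, posPart_sub_negPart, smul_neg, neg_smul, neg_neg]
      rw [hcx] at h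
      rw [h, hsmul hc' (posPart_nonneg x), hsmul hc' (negPart_nonneg x), neg_smul, neg_smul]
      abel

theorem linearMapOfNonneg_apply_of_nonneg (φ : E → M)
    (hadd : ∀ ⦃x y : E⦄, 0 ≤ x → 0 ≤ y → φ (x + y) = φ x + φ y)
    (hsmul : ∀ ⦃c : ℝ⦄, 0 ≤ c → ∀ ⦃x : E⦄, 0 ≤ x → φ (c • x) = c • φ x) {x : E} (hx : 0 ≤ x) :
    linearMapOfNonneg φ hadd hsmul x = φ x := by
  have hφ0 : φ 0 = 0 := by simpa using hadd le_rfl le_rfl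
  change φ x⁺ - φ x⁻ = φ x
  rw [posPart_eq_self.2 hx, negPart_eq_zero.2 hx, hφ0, sub_zero]

end OrderedModule

section PositiveFunctional

variable {E : Type*} [Lattice E] [AddCommGroup E] [AddLeftMono E] [Module ℝ E]

theorem IsPositive.monotone_s11 {l : E →ₗ[ℝ] ℝ} (hl : IsPositive l) : Monotone l := fun x y h => by
  simpa [sub_nonneg] using hl (y - x) (sub_nonneg.2 h)

theorem LinearMap.ext_of_nonneg {M : Type*} [AddCommGroup M] [Module ℝ M] {f g : E →ₗ[ℝ] M}
    (h : ∀ x, 0 ≤ x → f x = g x) : f = g :=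
  LinearMap.ext fun x => by
    rw [← posPart_sub_negPart x, map_sub, map_sub, h _ (posPart_nonneg x), h _ (negPart_nonneg x)]

theorem isRieszHom_of_disjoint {f : E →ₗ[ℝ] ℝ} (hf : IsPositive f)
    (h : ∀ p q : E, p ⊓ q = 0 → f p = 0 ∨ f q = 0) : IsRieszHom f := by
  intro x y
  have hsup : f (x ⊔ y) = f y + f (x - y)⁺ := by rw [sup_eq_add_posPart_sub, map_add]
  have hx : f x = f y + f (x - y)⁺ - f (x - y)⁻ := by
    rw [add_sub_assoc, ← map_sub, posPart_sub_negPart, ← map_add, add_sub_cancel]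
  rcases h _ _ (posPart_inf_negPart_eq_zero (x - y)) with h0 | h0
  · rw [hsup, h0, add_zero, sup_eq_right.2]
    linarith [hf _ (negPart_nonneg (x - y))]
  · rw [hsup, sup_eq_left.2] <;> linarith [hf _ (posPart_nonneg (x - y))]

theorem exists_inf_eq_zero_of_not_isRieszHom {l : E →ₗ[ℝ] ℝ} (hl : IsPositive l)
    (hnot : ¬ IsRieszHom l) : ∃ u v : E, u ⊓ v = 0 ∧ 0 < l u ∧ 0 < l v := by
  contrapose! hnot
  refine isRieszHom_of_disjoint hl fun p q hpq => ?_
  have hp : 0 ≤ p := hpq ▸ inf_le_left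
  have hq : 0 ≤ q := hpq ▸ inf_le_right
  rcases (hl p hp).eq_or_lt with hp0 | hp0
  · exact Or.inl hp0.symm
  · exact Or.inr (le_antisymm (hnot p q hpq hp0) (hl q hq))

end PositiveFunctional

-- `(l x / l u) • u` has the same `l`-value as `x`; truncating at any larger multiple of `u`
-- gives the same value (`truncApply_eq`).
noncomputable def truncApply {E : Type*} [Lattice E] [AddCommGroup E] [Module ℝ E]
    (l : E →ₗ[ℝ] ℝ) (u x : E) : ℝ :=
  l (x ⊓ (l x / l u) • u)

theorem truncApply_smul {E : Type*} [Lattice E] [AddCommGroup E] [Module ℝ E] [PosSMulMono ℝ E]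
    {l : E →ₗ[ℝ] ℝ} {u : E} {c : ℝ} (hc : 0 ≤ c) (x : E) :
    truncApply l u (c • x) = c * truncApply l u x := by
  rw [truncApply, truncApply, map_smul, smul_eq_mul, mul_div_assoc, ← smul_smul,
    ← smul_inf_of_nonneg hc, map_smul, smul_eq_mul]

section Grothendieck

variable {E : Type*} [Lattice E] [AddCommGroup E] [AddLeftMono E] [Module ℝ E]
  {l : E →ₗ[ℝ] ℝ}

theorem IsGrothendieckSubspace.apply_sup_sup_add_apply_inf_inf
    (hker : IsGrothendieckSubspace (LinearMap.ker l)) {x y z : E} (hx : l x = l z)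
    (hy : l y = l z) : l (x ⊔ y ⊔ z) + l (x ⊓ y ⊓ z) = 2 * l z := by
  have hG := hker (x - z) (by simp [hx]) (y - z) (by simp [hy])
  rw [← sub_self z, ← sup_sub, ← sup_sub, ← inf_sub, ← inf_sub, LinearMap.mem_ker, map_add,
    map_sub, map_sub] at hG
  linarith

theorem IsGrothendieckSubspace.apply_inf_add_eq
    (hker : IsGrothendieckSubspace (LinearMap.ker l)) {a b z : E} (hab : a ⊓ b = 0)
    (hz : 0 ≤ z) (ha : l a = l z) (hb : l b = l z) : l (z ⊓ (a + b)) = l z := by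
  have h := hker.apply_sup_sup_add_apply_inf_inf ha hb
  rw [hab, inf_eq_left.2 hz, map_zero, add_zero, ← add_eq_sup_of_inf_eq_zero hab, sup_comm] at h
  have hsum := congrArg l (inf_add_sup z (a + b))
  rw [map_add, map_add, map_add] at hsum
  linarith

variable [PosSMulMono ℝ E] {u v : E}

-- Scaling `u` and `v` to the `l`-value of `x`, `apply_inf_add_eq` shows that they carry all of `x`.
theorem IsGrothendieckSubspace.apply_inf_smul_add_apply_inf_smul
    (hker : IsGrothendieckSubspace (LinearMap.ker l)) (hl : IsPositive l) (huv : u ⊓ v = 0)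
    (hlu : 0 < l u) (hlv : 0 < l v) {x : E} (hx : 0 ≤ x) {s t : ℝ} (hs : l x / l u ≤ s)
    (ht : l x / l v ≤ t) : l (x ⊓ s • u) + l (x ⊓ t • v) = l x := by
  have hu : 0 ≤ u := huv ▸ inf_le_left
  have hv : 0 ≤ v := huv ▸ inf_le_right
  have ha : 0 ≤ l x / l u := div_nonneg (hl x hx) hlu.le
  have hb : 0 ≤ l x / l v := div_nonneg (hl x hx) hlv.le
  have hcover : l (x ⊓ ((l x / l u) • u + (l x / l v) • v)) = l x :=
    hker.apply_inf_add_eq (smul_inf_smul_eq_zero huv ha hb) hx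
      (by simp [div_mul_cancel₀ _ hlu.ne']) (by simp [div_mul_cancel₀ _ hlv.ne'])
  have hsplit : x ⊓ ((l x / l u) • u + (l x / l v) • v) ≤ x ⊓ s • u + x ⊓ t • v :=
    (inf_add_le_inf_add_inf hx (smul_nonneg ha hu) (smul_nonneg hb hv)).trans
      (add_le_add (inf_le_inf_left x (smul_le_smul_of_le_of_nonneg hs hu))
        (inf_le_inf_left x (smul_le_smul_of_le_of_nonneg ht hv)))
  have hdisj : x ⊓ s • u + x ⊓ t • v ≤ x :=
    inf_add_inf_le_of_inf_eq_zero hx (smul_inf_smul_eq_zero huv (ha.trans hs) (hb.trans ht))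
  have h₁ := hl.monotone_s11 hsplit
  have h₂ := hl.monotone_s11 hdisj
  rw [map_add] at h₁ h₂
  linarith

theorem IsGrothendieckSubspace.apply_eq_zero_of_inf_eq_zero
    (hker : IsGrothendieckSubspace (LinearMap.ker l)) (hl : IsPositive l) (huv : u ⊓ v = 0)
    (hlu : 0 < l u) (hlv : 0 < l v) {w : E} (hwu : w ⊓ u = 0) (hwv : w ⊓ v = 0) : l w = 0 := by
  have hw : 0 ≤ w := hwu ▸ inf_le_left
  have hwu' : w ⊓ (l w / l u) • u = 0 := by
    simpa using smul_inf_smul_eq_zero hwu zero_le_one (div_nonneg (hl w hw) hlu.le)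
  have hwv' : w ⊓ (l w / l v) • v = 0 := by
    simpa using smul_inf_smul_eq_zero hwv zero_le_one (div_nonneg (hl w hw) hlv.le)
  have h := hker.apply_inf_smul_add_apply_inf_smul hl huv hlu hlv hw le_rfl le_rfl
  rw [hwu', hwv', map_zero, zero_add] at h
  exact h.symm

theorem truncApply_eq (hker : IsGrothendieckSubspace (LinearMap.ker l)) (hl : IsPositive l)
    (huv : u ⊓ v = 0) (hlu : 0 < l u) (hlv : 0 < l v) {x : E} (hx : 0 ≤ x) {s : ℝ}
    (hs : l x / l u ≤ s) : truncApply l u x = l (x ⊓ s • u) := by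
  have h₁ := hker.apply_inf_smul_add_apply_inf_smul hl huv hlu hlv hx le_rfl le_rfl
  have h₂ := hker.apply_inf_smul_add_apply_inf_smul hl huv hlu hlv hx hs le_rfl
  rw [truncApply]
  linarith

theorem truncApply_add (hker : IsGrothendieckSubspace (LinearMap.ker l)) (hl : IsPositive l)
    (huv : u ⊓ v = 0) (hlu : 0 < l u) (hlv : 0 < l v) {x y : E} (hx : 0 ≤ x) (hy : 0 ≤ y) :
    truncApply l u (x + y) = truncApply l u x + truncApply l u y := by
  have hu : 0 ≤ u := huv ▸ inf_le_left
  set s := l (x + y) / l u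
  have hs : 0 ≤ s := div_nonneg (hl _ (add_nonneg hx hy)) hlu.le
  have hxs : l x / l u ≤ s :=
    div_le_div_of_nonneg_right (hl.monotone_s11 (le_add_of_nonneg_right hy)) hlu.le
  have hys : l y / l u ≤ s :=
    div_le_div_of_nonneg_right (hl.monotone_s11 (le_add_of_nonneg_left hx)) hlu.le
  rw [truncApply_eq hker hl huv hlu hlv hx hxs, truncApply_eq hker hl huv hlu hlv hy hys, ← map_add]
  apply le_antisymm
  · rw [truncApply_eq hker hl huv hlu hlv (add_nonneg hx hy) le_rfl, inf_comm, inf_comm x,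
      inf_comm y]
    exact hl.monotone_s11 (inf_add_le_inf_add_inf (smul_nonneg hs hu) hx hy)
  · rw [truncApply_eq hker hl huv hlu hlv (add_nonneg hx hy) (s := s + s) (by linarith), add_smul]
    exact hl.monotone_s11 (le_inf (add_le_add inf_le_left inf_le_left)
      (add_le_add inf_le_right inf_le_right))

-- Otherwise the truncations of `p` and `q` would be disjoint from each other and from `v`,
-- with positive `l`-values, which `apply_eq_zero_of_inf_eq_zero` forbids.
theorem truncApply_eq_zero_or_eq_zero (hker : IsGrothendieckSubspace (LinearMap.ker l))
    (hl : IsPositive l) (huv : u ⊓ v = 0) (hlu : 0 < l u) (hlv : 0 < l v) {p q : E}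
    (hpq : p ⊓ q = 0) : truncApply l u p = 0 ∨ truncApply l u q = 0 := by
  have hu : 0 ≤ u := huv ▸ inf_le_left
  have hv : 0 ≤ v := huv ▸ inf_le_right
  have hp : 0 ≤ p := hpq ▸ inf_le_left
  have hq : 0 ≤ q := hpq ▸ inf_le_right
  set s := max (l p / l u) (l q / l u)
  have hs : 0 ≤ s := (div_nonneg (hl p hp) hlu.le).trans (le_max_left _ _)
  rw [truncApply_eq hker hl huv hlu hlv hp (le_max_left _ _),
    truncApply_eq hker hl huv hlu hlv hq (le_max_right _ _)]
  by_contra! h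
  have hP : 0 ≤ p ⊓ s • u := le_inf hp (smul_nonneg hs hu)
  have hQ : 0 ≤ q ⊓ s • u := le_inf hq (smul_nonneg hs hu)
  have hvsu : v ⊓ s • u = 0 := by
    simpa using smul_inf_smul_eq_zero (inf_comm v u ▸ huv) zero_le_one hs
  refine hlv.ne' (hker.apply_eq_zero_of_inf_eq_zero hl
    (inf_eq_zero_of_le_of_le hpq hP hQ inf_le_left inf_le_left)
    ((hl _ hP).lt_of_ne' h.1) ((hl _ hQ).lt_of_ne' h.2)
    (inf_eq_zero_of_le_of_le hvsu hv hP le_rfl inf_le_right)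
    (inf_eq_zero_of_le_of_le hvsu hv hQ le_rfl inf_le_right))

theorem IsGrothendieckSubspace.exists_isRieszHom_apply_eq_apply_inf_smul
    (hker : IsGrothendieckSubspace (LinearMap.ker l)) (hl : IsPositive l) (huv : u ⊓ v = 0)
    (hlu : 0 < l u) (hlv : 0 < l v) :
    ∃ f : E →ₗ[ℝ] ℝ, IsRieszHom f ∧ ∀ x, 0 ≤ x → ∀ s, l x / l u ≤ s → f x = l (x ⊓ s • u) := by
  have hu : 0 ≤ u := huv ▸ inf_le_left
  let f := linearMapOfNonneg (truncApply l u)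
    (fun _ _ hx hy => truncApply_add hker hl huv hlu hlv hx hy)
    (fun c hc x _ => by rw [smul_eq_mul]; exact truncApply_smul hc x)
  have hf : ∀ x, 0 ≤ x → f x = truncApply l u x := fun x hx =>
    linearMapOfNonneg_apply_of_nonneg _ _ _ hx
  refine ⟨f, isRieszHom_of_disjoint (fun x hx => ?_) (fun p q hpq => ?_),
    fun x hx s hs => (hf x hx).trans (truncApply_eq hker hl huv hlu hlv hx hs)⟩
  · rw [hf x hx]
    exact hl _ (le_inf hx (smul_nonneg (div_nonneg (hl x hx) hlu.le) hu))
  · rw [hf p (hpq ▸ inf_le_left), hf q (hpq ▸ inf_le_right)]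
    exact truncApply_eq_zero_or_eq_zero hker hl huv hlu hlv hpq

end Grothendieck

theorem positive_grothendieck_not_hom_decomposes (l : X →ₗ[ℝ] ℝ)
    (hl : IsPositive l) (hker : IsGrothendieckSubspace (LinearMap.ker l))
    (hnot : ¬ IsRieszHom l) :
    ∃ f g : X →ₗ[ℝ] ℝ, IsRieszHom f ∧ IsRieszHom g ∧ f ≠ 0 ∧ g ≠ 0 ∧ l = f + g := by
  obtain ⟨u, v, huv, hlu, hlv⟩ := exists_inf_eq_zero_of_not_isRieszHom hl hnot
  have hvu : v ⊓ u = 0 := inf_comm v u ▸ huv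
  obtain ⟨f, hf, hfu⟩ := hker.exists_isRieszHom_apply_eq_apply_inf_smul hl huv hlu hlv
  obtain ⟨g, hg, hgv⟩ := hker.exists_isRieszHom_apply_eq_apply_inf_smul hl hvu hlv hlu
  have hf_u : f u = l u := by
    rw [hfu u (huv ▸ inf_le_left) 1 (div_self hlu.ne').le, one_smul, inf_idem]
  have hg_v : g v = l v := by
    rw [hgv v (hvu ▸ inf_le_left) 1 (div_self hlv.ne').le, one_smul, inf_idem]
  refine ⟨f, g, hf, hg, fun h => hlu.ne' ?_, fun h => hlv.ne' ?_,
    LinearMap.ext_of_nonneg fun x hx => ?_⟩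
  · rw [← hf_u, h, LinearMap.zero_apply]
  · rw [← hg_v, h, LinearMap.zero_apply]
  · rw [LinearMap.add_apply, hfu x hx _ le_rfl, hgv x hx _ le_rfl,
      hker.apply_inf_smul_add_apply_inf_smul hl huv hlu hlv hx le_rfl le_rfl]
end
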